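/- arXiv:2207.05982 — 6 statements merged into one kernel-verified Lean document; each statement's English description precedes it below -/
import Mathlib

section
/- For two nonnegative extended-real-valued sequences (a_n) and (b_n), one has liminf_{n→∞} (1/n) log(a_n + b_n) ≤ max( liminf_{n→∞} (1/n) log a_n , limsup_{n→∞} (1/n) log b_n ). -/
/-!
Since `a + b ≤ 2 max(a, b)`, we have `(1/n) log (a_n + b_n) ≤ (1/n) log 2 + max(F_n, G_n)` with
`F_n = (1/n) log a_n` and `G_n = (1/n) log b_n`. The error term `(1/n) log 2` tends to `0`, so it does
not affect the liminf. Finally `liminf max(F, G) ≤ max(liminf F, limsup G)`: any `c` above the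
right-hand side has `F_n < c` frequently and `G_n < c` eventually, hence `max(F_n, G_n) < c`
frequently.
-/

open Filter ENNReal Topology

theorem Filter.liminf_sup_le_liminf_sup_limsup {ι α : Type*} [CompleteLinearOrder α]
    [DenselyOrdered α] {f : Filter ι} (u v : ι → α) :
    liminf (fun i => u i ⊔ v i) f ≤ liminf u f ⊔ limsup v f := by
  refine le_of_forall_gt_imp_ge_of_dense fun c hc => ?_
  obtain ⟨hu, hv⟩ := sup_lt_iff.1 hc
  have hu_freq : ∃ᶠ i in f, u i < c := frequently_lt_of_liminf_lt (by isBoundedDefault) hu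
  have hv_ev : ∀ᶠ i in f, v i < c := eventually_lt_of_limsup_lt hv
  exact liminf_le_of_frequently_le <|
    (hu_freq.and_eventually hv_ev).mono fun _ hi => sup_le hi.1.le hi.2.le

theorem EReal.liminf_add_le_of_tendsto_zero {ι : Type*} {f : Filter ι} [f.NeBot]
    {u : ι → EReal} (hu : Tendsto u f (𝓝 0)) (v : ι → EReal) :
    liminf (u + v) f ≤ liminf v f := by
  have hlimsup : limsup u f = 0 := hu.limsup_eq
  simpa [hlimsup] using EReal.liminf_add_le (f := f) (u := u) (v := v) (.inl (by simp [hlimsup]))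
    (.inl (by simp [hlimsup]))

theorem ENNReal.log_two : ENNReal.log 2 = (Real.log 2 : EReal) := by
  simpa using ENNReal.log_ofReal_of_pos (x := 2) two_pos

theorem ENNReal.log_add_le_log_two_add_max (x y : ℝ≥0∞) :
    ENNReal.log (x + y) ≤ (Real.log 2 : EReal) + max (ENNReal.log x) (ENNReal.log y) := by
  have hxy : x + y ≤ 2 * max x y :=
    two_mul (max x y) ▸ add_le_add (le_max_left x y) (le_max_right x y)
  calc ENNReal.log (x + y) ≤ ENNReal.log (2 * max x y) := ENNReal.log_monotone hxy
    _ = _ := by rw [ENNReal.log_mul_add, ENNReal.log_two, ENNReal.log_monotone.map_max]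

theorem EReal.coe_mul_log_add_le {c : ℝ} (hc : 0 ≤ c) (x y : ℝ≥0∞) :
    (c : EReal) * ENNReal.log (x + y) ≤
      (c : EReal) * (Real.log 2 : EReal) +
        max ((c : EReal) * ENNReal.log x) ((c : EReal) * ENNReal.log y) := by
  have hc' : (0 : EReal) ≤ c := EReal.coe_nonneg.2 hc
  calc (c : EReal) * ENNReal.log (x + y)
      ≤ (c : EReal) * ((Real.log 2 : EReal) + max (ENNReal.log x) (ENNReal.log y)) :=
        mul_le_mul_of_nonneg_left (ENNReal.log_add_le_log_two_add_max x y) hc'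
    _ = _ := by
        rw [EReal.left_distrib_of_nonneg_of_ne_top hc' (EReal.coe_ne_top c),
          (monotone_mul_left_of_nonneg hc').map_max]

theorem EReal.tendsto_inv_natCast_mul_const (r : ℝ) :
    Tendsto (fun n : ℕ => (((n : ℝ)⁻¹ : ℝ) : EReal) * (r : EReal)) atTop (𝓝 0) := by
  simp_rw [← EReal.coe_mul, ← EReal.coe_zero, EReal.tendsto_coe]
  simpa using tendsto_inv_atTop_nhds_zero_nat.mul_const r

/-- Principle of the largest term (lower bound version): for nonnegative extended-real-valued
sequences `a`, `b`, `liminf (1/n) log (a n + b n) ≤ max (liminf (1/n) log a n, limsup (1/n) log b n)`. -/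
theorem stmt_1 (a b : ℕ → ℝ≥0∞) :
    Filter.liminf (fun n : ℕ => (((n : ℝ)⁻¹ : ℝ) : EReal) * ENNReal.log (a n + b n))
        Filter.atTop ≤
      Filter.liminf (fun n : ℕ => (((n : ℝ)⁻¹ : ℝ) : EReal) * ENNReal.log (a n)) Filter.atTop ⊔
        Filter.limsup (fun n : ℕ => (((n : ℝ)⁻¹ : ℝ) : EReal) * ENNReal.log (b n))
          Filter.atTop := by
  set F : ℕ → EReal := fun n => (((n : ℝ)⁻¹ : ℝ) : EReal) * ENNReal.log (a n)
  set G : ℕ → EReal := fun n => (((n : ℝ)⁻¹ : ℝ) : EReal) * ENNReal.log (b n)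
  set C : ℕ → EReal := fun n => (((n : ℝ)⁻¹ : ℝ) : EReal) * (Real.log 2 : EReal)
  calc _ ≤ liminf (C + fun n => F n ⊔ G n) atTop :=
        liminf_le_liminf <| .of_forall fun n =>
          EReal.coe_mul_log_add_le (by positivity) (a n) (b n)
    _ ≤ liminf (fun n => F n ⊔ G n) atTop :=
        EReal.liminf_add_le_of_tendsto_zero (EReal.tendsto_inv_natCast_mul_const _) _
    _ ≤ liminf F atTop ⊔ limsup G atTop := Filter.liminf_sup_le_liminf_sup_limsup F G
end

section
/- Let J be a maxitive concentration on a topological space E (i.e., additionally J(A ∪ B) ≤ J(A) ∨ J(B)). Then the convex integral φ_J is maxitive: φ_J(f ∨ g) ≤ φ_J(f) ∨ φ_J(g) for all Borel functions f, g : E → ℝ ∪ {-∞}. -/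
open Set

/-- The convex integral of `f` with respect to a concentration `J`. -/
noncomputable def convexIntegral {E : Type*} (J : Set E → EReal) (f : E → EReal) : EReal :=
  ⨆ c : ℝ, ((c : EReal) + J {x | (c : EReal) < f x})

lemma setOf_lt_sup {E α : Type*} [LinearOrder α] (c : α) (f g : E → α) :
    {x | c < f x ⊔ g x} = {x | c < f x} ∪ {x | c < g x} := by
  ext x
  exact lt_sup_iff

lemma le_convexIntegral {E : Type*} (J : Set E → EReal) (f : E → EReal) (c : ℝ) :
    (c : EReal) + J {x | (c : EReal) < f x} ≤ convexIntegral J f :=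
  le_iSup (fun c : ℝ => (c : EReal) + J {x | (c : EReal) < f x}) c

lemma EReal.add_sup (c a b : EReal) : c + (a ⊔ b) = (c + a) ⊔ (c + b) :=
  (monotone_id.const_add c).map_max

theorem stmt_7_general {E : Type*} [MeasurableSpace E]
    (J : Set E → EReal)
    (hJmax : ∀ A B : Set E, MeasurableSet A → MeasurableSet B → J (A ∪ B) ≤ J A ⊔ J B)
    (f g : E → EReal) (hf : Measurable f) (hg : Measurable g) :
    convexIntegral J (fun x => f x ⊔ g x) ≤ convexIntegral J f ⊔ convexIntegral J g := by
  refine iSup_le fun c => ?_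
  have hJ : J ({x | (c : EReal) < f x} ∪ {x | (c : EReal) < g x}) ≤
      J {x | (c : EReal) < f x} ⊔ J {x | (c : EReal) < g x} :=
    hJmax _ _ (measurableSet_lt measurable_const hf) (measurableSet_lt measurable_const hg)
  calc (c : EReal) + J {x | (c : EReal) < f x ⊔ g x}
      ≤ (c : EReal) + (J {x | (c : EReal) < f x} ⊔ J {x | (c : EReal) < g x}) := by
        rw [setOf_lt_sup]
        gcongr
    _ = ((c : EReal) + J {x | (c : EReal) < f x}) ⊔ ((c : EReal) + J {x | (c : EReal) < g x}) :=
        EReal.add_sup _ _ _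
    _ ≤ convexIntegral J f ⊔ convexIntegral J g :=
        sup_le_sup (le_convexIntegral J f c) (le_convexIntegral J g c)

/-- If the concentration `J` is maxitive, then the convex integral is maxitive:
`φ_J(f ∨ g) ≤ φ_J(f) ∨ φ_J(g)`. -/
theorem stmt_7 {E : Type*} [TopologicalSpace E] [MeasurableSpace E] [BorelSpace E]
    (J : Set E → EReal)
    (hJempty : J ∅ = ⊥) (hJuniv : J univ = 0) (hJle : ∀ A : Set E, J A ≤ 0)
    (hJmono : ∀ A B : Set E, MeasurableSet A → MeasurableSet B → A ⊆ B → J A ≤ J B)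
    (hJmax : ∀ A B : Set E, MeasurableSet A → MeasurableSet B → J (A ∪ B) ≤ J A ⊔ J B)
    (f g : E → EReal) (hf : Measurable f) (hg : Measurable g)
    (hftop : ∀ x, f x ≠ ⊤) (hgtop : ∀ x, g x ≠ ⊤) :
    convexIntegral J (fun x => f x ⊔ g x) ≤ convexIntegral J f ⊔ convexIntegral J g :=
  stmt_7_general J hJmax f g hf hg
end

section
/- Let E be a topological space and J a concentration on E. Let I : E → [0,∞]. Then the upper large-deviation bound J(C) ≤ -inf_{x∈C} I(x) holds for every closed set C ⊆ E if and only if the upper Laplace bound φ_J(f) ≤ sup_{x∈E}(f(x) - I(x)) holds for every upper semicontinuous function f : E → ℝ ∪ {-∞}. -/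
/-!
For each level `c`, the set `{f > c}` lies in the closed set `{f ≥ c}`, on which
`f - I ≥ c - I`; hence `c + J {f > c} ≤ c - inf_{f ≥ c} I ≤ sup (f - I)`. Conversely, for
closed `C` the function equal to `0` on `C` and `⊥` off `C` is upper semicontinuous, its convex
integral is at least `J C` (letting the level `c < 0` increase to `0`), and
`sup (f - I) = -inf_C I`.
-/

open Set

namespace EReal

lemma le_of_forall_neg_coe_add_le {a b : EReal} (h : ∀ c : ℝ, c < 0 → (c : EReal) + a ≤ b) :
    a ≤ b := by
  refine ge_of_forall_gt_iff_ge.1 fun z hz => ?_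
  obtain ⟨y, hzy, hya⟩ := exists_between_coe_real hz
  calc (z : EReal) = ((z - y : ℝ) : EReal) + y := by rw [← coe_add, _root_.sub_add_cancel]
    _ ≤ ((z - y : ℝ) : EReal) + a := by gcongr
    _ ≤ b := h _ (_root_.sub_neg.2 (mod_cast hzy))

lemma coe_add_neg_biInf_le_iSup_sub {E : Type*} {C : Set E} {f I : E → EReal} {c : ℝ}
    (hc : ∀ x ∈ C, (c : EReal) ≤ f x) :
    (c : EReal) + -(⨅ x ∈ C, I x) ≤ ⨆ x, f x - I x := by
  rw [add_comm]
  refine add_le_of_le_sub <| EReal.neg_le.1 <| le_iInf₂ fun x hx => EReal.neg_le.1 ?_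
  rw [le_sub_iff_add_le (.inl (coe_ne_bot c)) (.inl (coe_ne_top c)), add_comm, ← sub_eq_add_neg]
  calc (c : EReal) - I x ≤ f x - I x := sub_le_sub (hc x hx) le_rfl
    _ ≤ ⨆ x, f x - I x := le_iSup (fun x => f x - I x) x

end EReal

section Duality

variable {E : Type*} {J : Set E → EReal} {I : E → EReal}

lemma convexIntegral_le_iSup_sub [TopologicalSpace E] [MeasurableSpace E]
    [OpensMeasurableSpace E]
    (hJmono : ∀ A B : Set E, MeasurableSet A → MeasurableSet B → A ⊆ B → J A ≤ J B)
    (hJI : ∀ C : Set E, IsClosed C → J C ≤ -(⨅ x ∈ C, I x))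
    {f : E → EReal} (hf : UpperSemicontinuous f) :
    convexIntegral J f ≤ ⨆ x, f x - I x := by
  refine iSup_le fun c => ?_
  have hclosed : IsClosed {x | (c : EReal) ≤ f x} := hf.isClosed_preimage c
  calc (c : EReal) + J {x | (c : EReal) < f x} ≤ c + J {x | (c : EReal) ≤ f x} := by
        gcongr
        exact hJmono _ _ (hf.measurable measurableSet_Ioi) hclosed.measurableSet
          fun _ (hx : (c : EReal) < _) => hx.le
    _ ≤ c + -(⨅ x ∈ {x | (c : EReal) ≤ f x}, I x) := by gcongr; exact hJI _ hclosed
    _ ≤ ⨆ x, f x - I x := EReal.coe_add_neg_biInf_le_iSup_sub fun _ hx => hx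

lemma setOf_coe_lt_indicator_compl_bot (C : Set E) {c : ℝ} (hc : c < 0) :
    {x | (c : EReal) < Cᶜ.indicator (fun _ => ⊥) x} = C := by
  ext x
  by_cases hx : x ∈ C
  · simpa [hx] using hc
  · simp [hx]

lemma le_convexIntegral_indicator_compl_bot (C : Set E) :
    J C ≤ convexIntegral J (Cᶜ.indicator fun _ => ⊥) :=
  EReal.le_of_forall_neg_coe_add_le fun c hc => by
    have :=
      le_iSup (fun c : ℝ => (c : EReal) + J {x | (c : EReal) < Cᶜ.indicator (fun _ => ⊥) x}) c
    rwa [setOf_coe_lt_indicator_compl_bot C hc] at this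

lemma iSup_indicator_compl_bot_sub_le (C : Set E) :
    ⨆ x, Cᶜ.indicator (fun _ => (⊥ : EReal)) x - I x ≤ -(⨅ x ∈ C, I x) := by
  refine iSup_le fun x => ?_
  by_cases hx : x ∈ C
  · simpa [hx, sub_eq_add_neg] using iInf₂_le (f := fun x _ => I x) x hx
  · simp [hx]

end Duality

theorem stmt_10_general {E : Type*} [TopologicalSpace E] [MeasurableSpace E] [BorelSpace E]
    (J : Set E → EReal)
    (hJmono : ∀ A B : Set E, MeasurableSet A → MeasurableSet B → A ⊆ B → J A ≤ J B)
    (I : E → EReal) :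
    (∀ C : Set E, IsClosed C → J C ≤ -(⨅ x ∈ C, I x)) ↔
      (∀ f : E → EReal, UpperSemicontinuous f → (∀ x, f x ≠ ⊤) →
        convexIntegral J f ≤ ⨆ x : E, f x - I x) := by
  refine ⟨fun hJI f hf _ => convexIntegral_le_iSup_sub hJmono hJI hf, fun hLaplace C hC => ?_⟩
  have hf : UpperSemicontinuous (Cᶜ.indicator fun _ => (⊥ : EReal)) :=
    hC.isOpen_compl.upperSemicontinuous_indicator bot_le
  have hf_ne_top : ∀ x, Cᶜ.indicator (fun _ => (⊥ : EReal)) x ≠ ⊤ := fun x => by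
    by_cases hx : x ∈ C <;> simp [hx]
  calc J C ≤ convexIntegral J (Cᶜ.indicator fun _ => ⊥) :=
        le_convexIntegral_indicator_compl_bot C
    _ ≤ ⨆ x, Cᶜ.indicator (fun _ => ⊥) x - I x := hLaplace _ hf hf_ne_top
    _ ≤ -(⨅ x ∈ C, I x) := iSup_indicator_compl_bot_sub_le C

/-- Duality for the upper bounds: the upper large-deviation bound over closed sets holds
iff the upper Laplace bound over upper semicontinuous functions holds. -/
theorem stmt_10 {E : Type*} [TopologicalSpace E] [MeasurableSpace E] [BorelSpace E]
    (J : Set E → EReal)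
    (hJempty : J ∅ = ⊥) (hJuniv : J univ = 0) (hJle : ∀ A : Set E, J A ≤ 0)
    (hJmono : ∀ A B : Set E, MeasurableSet A → MeasurableSet B → A ⊆ B → J A ≤ J B)
    (I : E → EReal) (hI : ∀ x, 0 ≤ I x) :
    (∀ C : Set E, IsClosed C → J C ≤ -(⨅ x ∈ C, I x)) ↔
      (∀ f : E → EReal, UpperSemicontinuous f → (∀ x, f x ≠ ⊤) →
        convexIntegral J f ≤ ⨆ x : E, f x - I x) :=
  stmt_10_general J hJmono I
end

section
/- Let E be a topological space, J a concentration on E, and define the minimal rate function I_min(x) := sup{ f(x) - φ_J(f) : f : E → ℝ ∪ {-∞} lower semicontinuous }. Then for every x ∈ E, -I_min(x) = inf{ J(U) : U open, x ∈ U }. -/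
/-!
If `f` is lower semicontinuous and `c < f x`, the superlevel set `{f > c}` is an open
neighbourhood of `x`, so `c + inf J(U) ≤ c + J {f > c} ≤ φ_J(f)`; letting `c ↑ f x` gives
`f x - φ_J(f) ≤ -inf J(U)`. Conversely, for an open `U ∋ x` the function that is `0` on `U`
and `-∞` off `U` has `φ_J ≤ J(U)` because `J(∅) = -∞`, which gives `-I_min(x) ≤ J(U)`.
-/

open Set

theorem EReal.sub_le_neg_of_add_le {a b c : EReal} (ha : a ≠ ⊤) (h : a + c ≤ b) :
    a - b ≤ -c := by
  induction a <;> induction b <;> induction c <;> simp_all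
  · norm_cast at h ⊢; linarith

theorem EReal.add_le_of_forall_coe_lt {a b c : EReal} (h : ∀ r : ℝ, (r : EReal) < a → r + c ≤ b) :
    a + c ≤ b := by
  refine EReal.add_le_of_forall_lt fun a' ha' c' hc' => ?_
  induction a' with
  | bot => simp
  | top => simp at ha'
  | coe r => exact (add_le_add_right hc'.le _).trans (h r ha')

section

variable {E : Type*} (J : Set E → EReal)

theorem add_le_convexIntegral (f : E → EReal) (c : ℝ) :
    c + J {x | (c : EReal) < f x} ≤ convexIntegral J f :=
  le_iSup (fun c : ℝ => (c : EReal) + J {x | (c : EReal) < f x}) c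

open Classical in
noncomputable def botIndicator (U : Set E) : E → EReal := fun y => if y ∈ U then 0 else ⊥

variable {J}

theorem botIndicator_of_mem {U : Set E} {y : E} (hy : y ∈ U) : botIndicator U y = 0 := if_pos hy

theorem botIndicator_ne_top (U : Set E) (y : E) : botIndicator U y ≠ ⊤ := by
  unfold botIndicator; split_ifs <;> simp

theorem lowerSemicontinuous_botIndicator [TopologicalSpace E] {U : Set E} (hU : IsOpen U) :
    LowerSemicontinuous (botIndicator U) := by
  intro y c hc
  by_cases hy : y ∈ U
  · filter_upwards [hU.mem_nhds hy] with z hz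
    simpa [botIndicator, hy, hz] using hc
  · simp [botIndicator, hy] at hc

theorem convexIntegral_botIndicator_le (hJ : J ∅ = ⊥) (U : Set E) :
    convexIntegral J (botIndicator U) ≤ J U := by
  refine iSup_le fun c => ?_
  rcases lt_or_ge (c : EReal) 0 with hc | hc
  · have : {y | (c : EReal) < botIndicator U y} = U := by
      ext y; by_cases hy : y ∈ U <;> simp [botIndicator, hy, hc]
    rw [this]
    exact (add_le_add_left hc.le _).trans (zero_add _).le
  · have : {y | (c : EReal) < botIndicator U y} = ∅ := by
      ext y; by_cases hy : y ∈ U <;> simp [botIndicator, hy, hc.not_gt]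
    simp [this, hJ]

end

theorem stmt_11_general {E : Type*} [TopologicalSpace E]
    (J : Set E → EReal)
    (hJempty : J ∅ = ⊥)
    (x : E) :
    -(⨆ f ∈ {f : E → EReal | LowerSemicontinuous f ∧ ∀ y, f y ≠ ⊤},
        (f x - convexIntegral J f)) =
      ⨅ U ∈ {U : Set E | IsOpen U ∧ x ∈ U}, J U := by
  set L := ⨅ U ∈ {U : Set E | IsOpen U ∧ x ∈ U}, J U
  rw [← neg_neg L]
  congr 1
  apply le_antisymm
  · refine iSup₂_le fun f ⟨hf, hf_ne_top⟩ => EReal.sub_le_neg_of_add_le (hf_ne_top x) ?_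
    refine EReal.add_le_of_forall_coe_lt fun c hc => ?_
    have hL : L ≤ J {y | (c : EReal) < f y} := iInf₂_le _ ⟨hf.isOpen_preimage c, hc⟩
    exact (add_le_add_right hL _).trans (add_le_convexIntegral J f c)
  · refine EReal.neg_le.2 (le_iInf₂ fun U ⟨hU, hxU⟩ => EReal.neg_le.1 ?_)
    refine le_iSup₂_of_le (botIndicator U)
      ⟨lowerSemicontinuous_botIndicator hU, botIndicator_ne_top U⟩ ?_
    rw [botIndicator_of_mem hxU, zero_sub, EReal.neg_le_neg_iff]
    exact convexIntegral_botIndicator_le hJempty U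

/-- Representation of the minimal rate function: for every `x`,
`-I_min(x) = inf { J(U) : U open, x ∈ U }`. -/
theorem stmt_11 {E : Type*} [TopologicalSpace E] [MeasurableSpace E] [BorelSpace E]
    (J : Set E → EReal)
    (hJempty : J ∅ = ⊥) (hJuniv : J univ = 0) (hJle : ∀ A : Set E, J A ≤ 0)
    (hJmono : ∀ A B : Set E, MeasurableSet A → MeasurableSet B → A ⊆ B → J A ≤ J B)
    (x : E) :
    -(⨆ f ∈ {f : E → EReal | LowerSemicontinuous f ∧ ∀ y, f y ≠ ⊤},
        (f x - convexIntegral J f)) =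
      ⨅ U ∈ {U : Set E | IsOpen U ∧ x ∈ U}, J U :=
  stmt_11_general J hJempty x
end

section
/- Let E be a topological space and φ : B(E) → [-∞,∞] a monetary risk measure, i.e., φ(0) = 0, φ is monotone (f ≤ g implies φ(f) ≤ φ(g)), and translation invariant (φ(f + c) = φ(f) + c for real c). If f is a Borel function such that φ(tf) < ∞ for some t > 1, then lim_{m→∞} φ( f·1_{{f ≥ m}} - ∞·1_{{f < m}} ) = -∞, where f·1_A - ∞·1_{A^c} denotes the function equal to f on A and -∞ off A. -/
open Set Filter Topology
open scoped Classical

/-!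
On `{f ≥ m}` we have `f ≤ t f + (1 - t) m` because `t ≥ 1`, and off it the truncated function
is `⊥`. Monotonicity and translation invariance of `φ` therefore give
`φ(f 1_{f ≥ m} - ∞ 1_{f < m}) ≤ φ(t f) + (1 - t) m`, and the right-hand side tends to `-∞`
since `φ(t f) < ∞` and `1 - t < 0`.
-/

lemma EReal.le_mul_add_of_coe_le {t m : ℝ} (ht : 1 ≤ t) {y : EReal} (hy : (m : EReal) ≤ y) :
    y ≤ t * y + ((1 - t) * m : ℝ) := by
  induction y using EReal.rec with
  | bot => exact absurd (le_bot_iff.1 hy) (EReal.coe_ne_bot m)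
  | coe r =>
    have hmr : m ≤ r := EReal.coe_le_coe_iff.1 hy
    rw [← EReal.coe_mul, ← EReal.coe_add, EReal.coe_le_coe_iff]
    nlinarith
  | top =>
    rw [EReal.coe_mul_top_of_pos (by linarith), EReal.top_add_coe]

lemma EReal.tendsto_const_add_nhds_bot {α : Type*} {l : Filter α} {a : EReal} (ha : a ≠ ⊤)
    {u : α → EReal} (hu : Tendsto u l (𝓝 ⊥)) : Tendsto (fun x => a + u x) l (𝓝 ⊥) := by
  have hadd := EReal.continuousAt_add (p := (a, ⊥)) (Or.inl ha) (Or.inr bot_ne_top)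
  simpa [Function.comp_def] using hadd.tendsto.comp (tendsto_const_nhds.prodMk_nhds hu)

section RiskMeasure

variable {α : Type*} [MeasurableSpace α] {φ : (α → EReal) → EReal}

lemma risk_truncation_le_mul_add
    (hM : ∀ f g : α → EReal, Measurable f → Measurable g → (∀ x, f x ≤ g x) → φ f ≤ φ g)
    (hT : ∀ (f : α → EReal) (c : ℝ), Measurable f →
      φ (fun x => f x + (c : EReal)) = φ f + (c : EReal))
    {f : α → EReal} (hf : Measurable f) {t : ℝ} (ht : 1 ≤ t) (m : ℝ) :
    φ (fun x => if (m : EReal) ≤ f x then f x else ⊥)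
      ≤ φ (fun x => (t : EReal) * f x) + ((1 - t) * m : ℝ) := by
  have htf : Measurable fun x => (t : EReal) * f x := hf.const_mul _
  calc φ (fun x => if (m : EReal) ≤ f x then f x else ⊥)
      ≤ φ (fun x => (t : EReal) * f x + ((1 - t) * m : ℝ)) := by
        refine hM _ _ (Measurable.ite (measurableSet_le measurable_const hf) hf measurable_const)
          (htf.add_const _) fun x => ?_
        split_ifs with hx
        · exact EReal.le_mul_add_of_coe_le ht hx
        · exact bot_le
    _ = φ (fun x => (t : EReal) * f x) + ((1 - t) * m : ℝ) := hT _ _ htf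

end RiskMeasure

theorem stmt_13_general {E : Type*} [MeasurableSpace E]
    (φ : (E → EReal) → EReal)
    (hM : ∀ f g : E → EReal, Measurable f → Measurable g → (∀ x, f x ≤ g x) → φ f ≤ φ g)
    (hT : ∀ (f : E → EReal) (c : ℝ), Measurable f → φ (fun x => f x + (c : EReal)) = φ f + (c : EReal))
    (f : E → EReal) (hf : Measurable f)
    (ht : ∃ t : ℝ, 1 < t ∧ φ (fun x => (t : EReal) * f x) < ⊤) :
    Filter.Tendsto (fun m : ℕ => φ (fun x => if (m : EReal) ≤ f x then f x else ⊥))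
      Filter.atTop (nhds ⊥) := by
  obtain ⟨t, ht1, htφ⟩ := ht
  have hlin : Tendsto (fun m : ℕ => (((1 - t) * m : ℝ) : EReal)) atTop (𝓝 ⊥) :=
    EReal.tendsto_coe_nhds_bot_iff.2
      (tendsto_natCast_atTop_atTop.const_mul_atTop_of_neg (by linarith))
  exact tendsto_nhds_bot_mono' (EReal.tendsto_const_add_nhds_bot htφ.ne hlin)
    fun m => risk_truncation_le_mul_add hM hT hf ht1.le m

/-- Tail estimate for monetary risk measures: if `φ` is a monetary risk measure on Borel
functions and `φ(t f) < ∞` for some `t > 1`, then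
`φ(f·1_{{f ≥ m}} - ∞·1_{{f < m}}) → -∞` as `m → ∞`. -/
theorem stmt_13 {E : Type*} [TopologicalSpace E] [MeasurableSpace E] [BorelSpace E]
    (φ : (E → EReal) → EReal)
    (hN : φ (fun _ => 0) = 0)
    (hM : ∀ f g : E → EReal, Measurable f → Measurable g → (∀ x, f x ≤ g x) → φ f ≤ φ g)
    (hT : ∀ (f : E → EReal) (c : ℝ), Measurable f → φ (fun x => f x + (c : EReal)) = φ f + (c : EReal))
    (f : E → EReal) (hf : Measurable f) (hftop : ∀ x, f x ≠ ⊤)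
    (ht : ∃ t : ℝ, 1 < t ∧ φ (fun x => (t : EReal) * f x) < ⊤) :
    Filter.Tendsto (fun m : ℕ => φ (fun x => if (m : EReal) ≤ f x then f x else ⊥))
      Filter.atTop (nhds ⊥) :=
  stmt_13_general φ hM hT f hf ht
end

section
/- Let E be a topological space, (𝓔_n) a sequence of sublinear expectations on nonnegative Borel functions on E, and define ψ̄(f) := limsup_{n→∞} (1/n) log 𝓔_n(e^{nf}) for Borel f : E → ℝ ∪ {-∞}. Then ψ̄ is weakly maxitive: for every upper semicontinuous f and lower semicontinuous g_1,...,g_N with f ≤ g_1 ∨ ... ∨ g_N pointwise, one has ψ̄(f) ≤ max_{1≤i≤N} ψ̄(g_i). -/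
open Set Filter ENNReal

/-- The upper asymptotic entropy of a sequence of sublinear expectations. -/
noncomputable def upperEntropy {E : Type*} (𝓔 : ℕ → (E → ℝ≥0∞) → ℝ≥0∞) (f : E → EReal) : EReal :=
  Filter.limsup
    (fun n : ℕ => (((n : ℝ)⁻¹ : ℝ) : EReal) *
      ENNReal.log (𝓔 n (fun x => EReal.exp (((n : ℝ) : EReal) * f x))))
    Filter.atTop

/-!
For `n ≥ 1`, the pointwise bound `f ≤ max_i g_i` gives `e^{nf} ≤ ∑_i e^{n g_i}`, so monotonicity
and finite subadditivity of `𝓔_n` yield `𝓔_n(e^{nf}) ≤ ∑_i 𝓔_n(e^{n g_i})`. Now `ψ̄(h)` is the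
upper exponential growth rate of `n ↦ 𝓔_n(e^{nh})`, and the upper exponential growth rate of a
finite sum is the largest of those of its terms (the principle of the largest term,
`ExpGrowth.expGrowthSup_sum`).
-/

open ExpGrowth

namespace EReal

lemma exp_coe_mul_ne_top {c : ℝ} (hc : 0 ≤ c) {y : EReal} (hy : y ≠ ⊤) : exp (c * y) ≠ ⊤ := by
  rw [Ne, exp_eq_top_iff, ← Ne, mul_ne_top]
  exact ⟨.inl (coe_ne_bot c), .inl (EReal.coe_nonneg.2 hc), .inl (coe_ne_top c), .inr hy⟩

lemma exp_coe_mul_le_sum_of_le_iSup {ι : Type*} [Fintype ι] {x : EReal} {y : ι → EReal}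
    (h : x ≤ ⨆ i, y i) {c : ℝ} (hc : 0 < c) : exp (c * x) ≤ ∑ i, exp (c * y i) := by
  rcases isEmpty_or_nonempty ι with hι | hι
  · have hx : x = ⊥ := by simpa using h
    simp [hx, coe_mul_bot_of_pos hc]
  · obtain ⟨i, hi⟩ := exists_eq_ciSup_of_finite (f := y)
    calc exp (c * x) ≤ exp (c * y i) :=
          exp_monotone (mul_le_mul_of_nonneg_left (hi ▸ h) (EReal.coe_nonneg.2 hc.le))
      _ ≤ ∑ j, exp (c * y j) :=
          Finset.single_le_sum (f := fun j => exp (c * y j)) (fun _ _ => zero_le)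
            (Finset.mem_univ i)

end EReal

lemma Measurable.ereal_exp_coe_mul {E : Type*} [MeasurableSpace E] {h : E → EReal}
    (hh : Measurable h) {c : ℝ} (hc : 0 ≤ c) : Measurable fun x => EReal.exp (c * h x) :=
  EReal.measurable_exp.comp
    ((monotone_mul_left_of_nonneg (EReal.coe_nonneg.2 hc)).measurable.comp hh)

lemma upperEntropy_eq_expGrowthSup {E : Type*} (𝓔 : ℕ → (E → ℝ≥0∞) → ℝ≥0∞) (f : E → EReal) :
    upperEntropy 𝓔 f = expGrowthSup fun n => 𝓔 n fun x => EReal.exp ((n : ℝ) * f x) := by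
  refine limsup_congr (Eventually.of_forall fun n => ?_)
  rw [EReal.div_eq_inv_mul]
  congr 1

lemma le_sum_of_subadditive_on_measurable {E ι : Type*} [MeasurableSpace E]
    (𝓔 : (E → ℝ≥0∞) → ℝ≥0∞) (hzero : 𝓔 0 = 0)
    (hsubadd : ∀ f g : E → ℝ≥0∞, Measurable f → Measurable g →
      (∀ x, f x ≠ ⊤) → (∀ x, g x ≠ ⊤) → 𝓔 (fun x => f x + g x) ≤ 𝓔 f + 𝓔 g)
    (s : Finset ι) {F : ι → E → ℝ≥0∞} (hF : ∀ i ∈ s, Measurable (F i))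
    (hFtop : ∀ i ∈ s, ∀ x, F i x ≠ ⊤) :
    𝓔 (∑ i ∈ s, F i) ≤ ∑ i ∈ s, 𝓔 (F i) :=
  Finset.le_sum_of_subadditive_on_pred 𝓔 (fun f => Measurable f ∧ ∀ x, f x ≠ ⊤) hzero.le
    (fun f g hf hg => hsubadd f g hf.1 hg.1 hf.2 hg.2)
    (fun _ _ hf hg => ⟨hf.1.add hg.1, fun x => ENNReal.add_ne_top.2 ⟨hf.2 x, hg.2 x⟩⟩)
    F fun i hi => ⟨hF i hi, hFtop i hi⟩

theorem stmt_18_general {E : Type*} [TopologicalSpace E] [MeasurableSpace E] [BorelSpace E]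
    (𝓔 : ℕ → (E → ℝ≥0∞) → ℝ≥0∞)
    (hconst : ∀ (n : ℕ) (c : ℝ≥0∞), c ≠ ⊤ → 𝓔 n (fun _ => c) = c)
    (hmono : ∀ (n : ℕ) (f g : E → ℝ≥0∞), Measurable f → Measurable g →
      (∀ x, f x ≠ ⊤) → (∀ x, g x ≠ ⊤) → (∀ x, f x ≤ g x) → 𝓔 n f ≤ 𝓔 n g)
    (hsubadd : ∀ (n : ℕ) (f g : E → ℝ≥0∞), Measurable f → Measurable g →
      (∀ x, f x ≠ ⊤) → (∀ x, g x ≠ ⊤) → 𝓔 n (fun x => f x + g x) ≤ 𝓔 n f + 𝓔 n g)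
    (N : ℕ) (f : E → EReal) (g : Fin N → E → EReal)
    (hf : UpperSemicontinuous f) (hftop : ∀ x, f x ≠ ⊤)
    (hg : ∀ i, LowerSemicontinuous (g i)) (hgtop : ∀ i x, g i x ≠ ⊤)
    (hle : ∀ x, f x ≤ ⨆ i, g i x) :
    upperEntropy 𝓔 f ≤ ⨆ i, upperEntropy 𝓔 (g i) := by
  set G : Fin N → ℕ → E → ℝ≥0∞ := fun i n x => EReal.exp ((n : ℝ) * g i x)
  have hG : ∀ n i, Measurable (G i n) := fun n i =>
    (hg i).measurable.ereal_exp_coe_mul n.cast_nonneg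
  have hGtop : ∀ n i x, G i n x ≠ ⊤ := fun n i x =>
    EReal.exp_coe_mul_ne_top n.cast_nonneg (hgtop i x)
  have hbound : ∀ n, 0 < n → 𝓔 n (fun x => EReal.exp ((n : ℝ) * f x)) ≤ ∑ i, 𝓔 n (G i n) :=
    fun n hn => calc
      _ ≤ 𝓔 n (fun x => ∑ i, G i n x) :=
        hmono n _ _ (hf.measurable.ereal_exp_coe_mul n.cast_nonneg)
          (Finset.measurable_sum _ fun i _ => hG n i)
          (fun x => EReal.exp_coe_mul_ne_top n.cast_nonneg (hftop x))
          (fun x => ENNReal.sum_ne_top.2 fun i _ => hGtop n i x)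
          (fun x => EReal.exp_coe_mul_le_sum_of_le_iSup (hle x) (Nat.cast_pos.2 hn))
      _ ≤ ∑ i, 𝓔 n (G i n) := by
        rw [← Finset.sum_fn]
        exact le_sum_of_subadditive_on_measurable (𝓔 n) (hconst n 0 zero_ne_top) (hsubadd n) _
          (fun i _ => hG n i) fun i _ => hGtop n i
  simp only [upperEntropy_eq_expGrowthSup]
  calc _ ≤ expGrowthSup (∑ i, fun n => 𝓔 n (G i n)) := by
        refine expGrowthSup_eventually_monotone ?_
        filter_upwards [eventually_gt_atTop 0] with n hn
        rw [Finset.sum_apply]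
        exact hbound n hn
    _ = ⨆ i, expGrowthSup fun n => 𝓔 n (G i n) := by
        rw [expGrowthSup_sum]
        simp

/-- The upper asymptotic entropy `ψ̄(f) = limsup (1/n) log 𝓔_n(e^{nf})` of a sequence of
sublinear expectations is weakly maxitive: if `f` is upper semicontinuous,
`g 1, …, g N` are lower semicontinuous and `f ≤ g 1 ∨ ⋯ ∨ g N` pointwise, then
`ψ̄(f) ≤ max_i ψ̄(g i)`. -/
theorem stmt_18 {E : Type*} [TopologicalSpace E] [MeasurableSpace E] [BorelSpace E]
    (𝓔 : ℕ → (E → ℝ≥0∞) → ℝ≥0∞)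
    (hconst : ∀ (n : ℕ) (c : ℝ≥0∞), c ≠ ⊤ → 𝓔 n (fun _ => c) = c)
    (hmono : ∀ (n : ℕ) (f g : E → ℝ≥0∞), Measurable f → Measurable g →
      (∀ x, f x ≠ ⊤) → (∀ x, g x ≠ ⊤) → (∀ x, f x ≤ g x) → 𝓔 n f ≤ 𝓔 n g)
    (hsubadd : ∀ (n : ℕ) (f g : E → ℝ≥0∞), Measurable f → Measurable g →
      (∀ x, f x ≠ ⊤) → (∀ x, g x ≠ ⊤) → 𝓔 n (fun x => f x + g x) ≤ 𝓔 n f + 𝓔 n g)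
    (hhom : ∀ (n : ℕ) (a : ℝ≥0∞) (f : E → ℝ≥0∞), a ≠ ⊤ → Measurable f → (∀ x, f x ≠ ⊤) →
      𝓔 n (fun x => a * f x) = a * 𝓔 n f)
    (N : ℕ) (f : E → EReal) (g : Fin N → E → EReal)
    (hf : UpperSemicontinuous f) (hftop : ∀ x, f x ≠ ⊤)
    (hg : ∀ i, LowerSemicontinuous (g i)) (hgtop : ∀ i x, g i x ≠ ⊤)
    (hle : ∀ x, f x ≤ ⨆ i, g i x) :
    upperEntropy 𝓔 f ≤ ⨆ i, upperEntropy 𝓔 (g i) :=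
  stmt_18_general 𝓔 hconst hmono hsubadd N f g hf hftop hg hgtop hle
end
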